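/- Let A be a commutative noetherian ring, let P ⊆ A be a prime ideal, and let s ∈ A \ P be such that the ideal P + (s) is a proper ideal of A. Then the localization A_s is not a projective A-module; more precisely, A_s has projective dimension exactly 1 as an A-module. -/

import Mathlib

/-!
The localization `A_s ≅ A[X]/(sX - 1)` has the free resolution
`0 → A[X] → A[X] → A_s → 0`, the first map being multiplication by `sX - 1`, so
`Ext^i(A_s, -)` vanishes for `i ≥ 2`.
If `Ext^1(A_s, A[X])` vanished, multiplication by `sX - 1` would have an `A`-linear left
inverse `ψ`. Iterating `ψ(X^n) = s ψ(X^(n+1)) - X^n` gives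
`ψ(1) = s^(k+1) ψ(X^(k+1)) - ∑_{j ≤ k} s^j X^j`; for `k` beyond the degree of `ψ(1)` the
coefficient of `X^k` yields `s^k (s c - 1) = 0` for some `c ∈ A`. As `s ∉ P`, this puts
`s c - 1` in `P`, so `P + (s) = A`.
-/

open CategoryTheory

universe u

/-- `Ext_A^i(M, N)` as an `A`-module. -/
noncomputable abbrev extGroup (A : Type u) [CommRing A] (M N : ModuleCat.{u} A) (i : ℕ) :
    ModuleCat A :=
  ((Ext A (ModuleCat.{u} A) i).obj (Opposite.op M)).obj N

/-- The projective dimension of an `A`-module `M`, defined as the least `n : ℕ∞` such that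
`Ext_A^i(M, N) = 0` for every `A`-module `N` and every `i > n` (and `∞` if no such `n` exists). -/
noncomputable def projDim (A : Type u) [CommRing A] (M : ModuleCat.{u} A) : ℕ∞ :=
  sInf {n : ℕ∞ | ∀ (N : ModuleCat.{u} A) (i : ℕ), n < (i : ℕ∞) →
    Subsingleton (extGroup A M N i)}

open Polynomial

section Algebra

variable {A : Type u} [CommRing A]

lemma Ideal.IsPrime.sup_span_singleton_eq_top {P : Ideal A} (hP : P.IsPrime) {s : A} (hs : s ∉ P)
    {k : ℕ} {c : A} (h : s ^ k * (s * c - 1) = 0) : P ⊔ Ideal.span {s} = ⊤ := by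
  have hc : s * c - 1 ∈ P :=
    (hP.mem_or_mem (h ▸ P.zero_mem)).resolve_left fun h' => hs (hP.mem_of_pow_mem k h')
  rw [Ideal.eq_top_iff_one, show (1 : A) = s * c - (s * c - 1) by ring]
  exact sub_mem (Ideal.mem_sup_right (Ideal.mul_mem_right _ _ (Ideal.mem_span_singleton_self s)))
    (Ideal.mem_sup_left hc)

variable (s : A)

lemma Polynomial.isRegular_C_mul_X_sub_one : IsRegular (C s * X - 1) :=
  isRegular_iff_mem_nonZeroDivisors.2 <|
    mem_nonzeroDivisors_of_coeff_mem 0 (by simpa using isUnit_one.neg.mem_nonZeroDivisors)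

noncomputable def Localization.awayPresentation : A[X] →ₗ[A] Localization.Away s :=
  ((Localization.awayEquivAdjoin s).symm.toAlgHom.comp (AdjoinRoot.mkₐ (C s * X - 1))).toLinearMap

lemma Localization.awayPresentation_surjective :
    Function.Surjective (Localization.awayPresentation s) :=
  (Localization.awayEquivAdjoin s).symm.surjective.comp AdjoinRoot.mk_surjective

lemma Localization.exact_mulLeft_awayPresentation :
    Function.Exact (LinearMap.mulLeft A (C s * X - 1)) (Localization.awayPresentation s) := by
  intro p
  change (Localization.awayEquivAdjoin s).symm (AdjoinRoot.mk _ p) = 0 ↔ _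
  rw [map_eq_zero_iff _ (AlgEquiv.injective _), AdjoinRoot.mk_eq_zero]
  exact exists_congr fun _ => eq_comm

lemma Polynomial.exists_pow_mul_mul_sub_one_eq_zero_of_leftInverse (ψ : A[X] →ₗ[A] A[X])
    (hψ : ψ ∘ₗ LinearMap.mulLeft A (C s * X - 1) = LinearMap.id) :
    ∃ (k : ℕ) (c : A), s ^ k * (s * c - 1) = 0 := by
  have step (n : ℕ) : ψ (X ^ n) = s • ψ (X ^ (n + 1)) - X ^ n := by
    have := LinearMap.congr_fun hψ (X ^ n)
    rw [LinearMap.comp_apply, LinearMap.mulLeft_apply, LinearMap.id_apply, sub_mul, one_mul,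
      mul_assoc, ← pow_succ', ← smul_eq_C_mul, map_sub, map_smul] at this
    linear_combination -this
  have expand (k : ℕ) :
      ψ 1 = s ^ k • ψ (X ^ k) - ∑ j ∈ Finset.range k, C (s ^ j) * X ^ j := by
    induction k with
    | zero => simp
    | succ k ih =>
      rw [ih, step, smul_sub, smul_smul, ← pow_succ, Finset.sum_range_succ, smul_eq_C_mul (s ^ k)]
      abel
  set k := (ψ 1).natDegree + 1
  refine ⟨k, (ψ (X ^ (k + 1))).coeff k, ?_⟩
  have := congrArg (coeff · k) (expand (k + 1))
  simp only [coeff_sub, coeff_smul, finsetSum_coeff, coeff_C_mul_X_pow] at this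
  rw [coeff_eq_zero_of_natDegree_lt (by omega), Finset.sum_ite_eq,
    if_pos (Finset.self_mem_range_succ k), smul_eq_mul] at this
  linear_combination -this

end Algebra

section TwoTermResolution

variable {A : Type u} [CommRing A] {P₁ P₀ M : Type u}
  [AddCommGroup P₁] [Module A P₁] [AddCommGroup P₀] [Module A P₀]
  [AddCommGroup M] [Module A M]
  (f : P₁ →ₗ[A] P₀)

noncomputable def twoTermComplex : ChainComplex (ModuleCat.{u} A) ℕ :=
  ChainComplex.of
    (fun | 0 => ModuleCat.of A P₀ | 1 => ModuleCat.of A P₁ | _ + 2 => ModuleCat.of A PUnit)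
    (fun | 0 => ModuleCat.ofHom f | _ + 1 => 0)
    (fun | 0 => Limits.zero_comp | _ + 1 => Limits.zero_comp)

lemma twoTermComplex_d_one_zero : (twoTermComplex f).d 1 0 = ModuleCat.ofHom f :=
  rfl

instance (n : ℕ) : Subsingleton ((twoTermComplex f).X (n + 2)) :=
  inferInstanceAs (Subsingleton PUnit)

lemma twoTermComplex_isZero_X_add_two (n : ℕ) : Limits.IsZero ((twoTermComplex f).X (n + 2)) :=
  ModuleCat.isZero_of_subsingleton _

instance (n : ℕ) (N : ModuleCat.{u} A) : Subsingleton ((twoTermComplex f).X (n + 2) ⟶ N) :=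
  ⟨(twoTermComplex_isZero_X_add_two f n).eq_of_src⟩

variable {f} {g : P₀ →ₗ[A] M} (hf : Function.Injective f) (hfg : Function.Exact f g)
  (hg : Function.Surjective g) [Module.Projective A P₁] [Module.Projective A P₀]

noncomputable def twoTermResolution : ProjectiveResolution (ModuleCat.of A M) where
  complex := twoTermComplex f
  projective
    | 0 => (IsProjective.iff_projective _).1 ‹_›
    | 1 => (IsProjective.iff_projective _).1 ‹_›
    | n + 2 => (twoTermComplex_isZero_X_add_two f n).projective
  π := (ChainComplex.toSingle₀Equiv _ _).symm
    ⟨ModuleCat.ofHom g, by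
      rw [twoTermComplex_d_one_zero]; exact ModuleCat.hom_ext hfg.linearMap_comp_eq_zero⟩
  quasiIso := ⟨fun
    | 0 => by
      rw [ChainComplex.quasiIsoAt₀_iff, ShortComplex.quasiIso_iff_of_zeros' _ rfl rfl rfl]
      refine ⟨(ShortComplex.moduleCat_exact_iff _).2 fun x hx => ?_,
        (ModuleCat.epi_iff_surjective _).2 hg⟩
      exact (hfg x).1 hx
    | 1 => by
      rw [quasiIsoAt_iff_exactAt' _ _ (ChainComplex.exactAt_succ_single_obj _ _),
        HomologicalComplex.exactAt_iff' _ 2 1 0 (by simp) (by simp),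
        ShortComplex.moduleCat_exact_iff]
      intro x hx
      exact ⟨0, (hf (hx.trans (map_zero f).symm)).symm ▸ map_zero _⟩
    | n + 2 => by
      rw [quasiIsoAt_iff_exactAt' _ _ (ChainComplex.exactAt_succ_single_obj _ _),
        HomologicalComplex.exactAt_iff' _ (n + 3) (n + 2) (n + 1) (by simp) (by simp)]
      exact ShortComplex.exact_of_isZero_X₂ _ (twoTermComplex_isZero_X_add_two f n)⟩

include hf hfg hg in
lemma subsingleton_extGroup_add_two (N : ModuleCat.{u} A) (n : ℕ) :
    Subsingleton (extGroup A (ModuleCat.of A M) N (n + 2)) := by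
  refine ModuleCat.subsingleton_of_isZero
    (Limits.IsZero.of_iso ?_ ((twoTermResolution hf hfg hg).isoExt (n + 2) N))
  exact ShortComplex.isZero_homology_of_isZero_X₂ _ <|
    ModuleCat.isZero_of_subsingleton (ModuleCat.of A ((twoTermComplex f).X (n + 2) ⟶ N))

include hf hfg hg in
lemma exists_leftInverse_of_subsingleton_extGroup_one
    (h : Subsingleton (extGroup A (ModuleCat.of A M) (ModuleCat.of A P₁) 1)) :
    ∃ ψ : P₀ →ₗ[A] P₁, ψ ∘ₗ f = LinearMap.id := by
  have hexact := (HomologicalComplex.exactAt_iff_isZero_homology _ 1).2 <|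
    Limits.IsZero.of_iso (ModuleCat.isZero_of_subsingleton (extGroup A _ _ 1))
      ((twoTermResolution hf hfg hg).isoExt 1 (ModuleCat.of A P₁)).symm
  rw [HomologicalComplex.exactAt_iff' _ 0 1 2 (by simp) (by simp),
    ShortComplex.moduleCat_exact_iff] at hexact
  obtain ⟨ψ, hψ⟩ := hexact (𝟙 (ModuleCat.of A P₁) : (twoTermComplex f).X 1 ⟶ _)
    (Subsingleton.elim (α := (twoTermComplex f).X 2 ⟶ _) _ _)
  exact ⟨ψ.hom, congrArg ModuleCat.Hom.hom hψ⟩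

end TwoTermResolution

lemma projDim_eq_one_of_subsingleton_extGroup_add_two {A : Type u} [CommRing A]
    {M N : ModuleCat.{u} A}
    (h₂ : ∀ (L : ModuleCat.{u} A) (n : ℕ), Subsingleton (extGroup A M L (n + 2)))
    (h₁ : ¬ Subsingleton (extGroup A M N 1)) : projDim A M = 1 := by
  refine le_antisymm (sInf_le fun L i hi => ?_) (le_sInf fun b hb => ?_)
  · obtain ⟨n, rfl⟩ :=
      Nat.exists_eq_add_of_le' (show 2 ≤ i by exact_mod_cast Order.add_one_le_of_lt hi)
    exact h₂ L n
  · by_contra hlt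
    exact h₁ (hb N 1 (by simpa using not_le.1 hlt))

theorem projDim_localizationAway_eq_one_general
    (A : Type u) [CommRing A]
    (P : Ideal A) (hP : P.IsPrime) (s : A) (hs : s ∉ P)
    (hPs : P ⊔ Ideal.span {s} ≠ ⊤) :
    ¬ Module.Projective A (Localization.Away s) ∧
      projDim A (ModuleCat.of A (Localization.Away s)) = 1 := by
  have hf := (isRegular_C_mul_X_sub_one s).left
  have hfg := Localization.exact_mulLeft_awayPresentation s
  have hg := Localization.awayPresentation_surjective s
  have hext₁ : ¬ Subsingleton (extGroup A (ModuleCat.of A (Localization.Away s))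
      (ModuleCat.of A A[X]) 1) := fun h => by
    obtain ⟨ψ, hψ⟩ := exists_leftInverse_of_subsingleton_extGroup_one hf hfg hg h
    obtain ⟨k, c, hkc⟩ := exists_pow_mul_mul_sub_one_eq_zero_of_leftInverse s ψ hψ
    exact hPs (hP.sup_span_singleton_eq_top hs hkc)
  refine ⟨fun hproj => hext₁ ?_, projDim_eq_one_of_subsingleton_extGroup_add_two
    (subsingleton_extGroup_add_two hf hfg hg) hext₁⟩
  have := (IsProjective.iff_projective (ModuleCat.of A (Localization.Away s))).1 hproj
  exact ModuleCat.subsingleton_of_isZero (isZero_Ext_succ_of_projective _ _ 0)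

theorem projDim_localizationAway_eq_one
    (A : Type u) [CommRing A] [IsNoetherianRing A]
    (P : Ideal A) (hP : P.IsPrime) (s : A) (hs : s ∉ P)
    (hPs : P ⊔ Ideal.span {s} ≠ ⊤) :
    ¬ Module.Projective A (Localization.Away s) ∧
      projDim A (ModuleCat.of A (Localization.Away s)) = 1 :=
  projDim_localizationAway_eq_one_general A P hP s hs hPs
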